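/- arXiv:2008.11094 — 9 statements merged into one kernel-verified Lean document; each statement's English description precedes it below -/
import Mathlib

section
/- Define an equivalence relation on focussed plays over a structure A: a focussed play is a pair (p, a) where p is a nonempty finite list [U₁,…,Uₙ] of subsets of A with a ∈ Uₙ; declare (p,a) ∼ (q,a') iff a = a', the greatest common prefix p ⊓ q is nonempty, and a belongs to λ(u) for every prefix u with p ⊓ q ⊑ u ⊑ p or p ⊓ q ⊑ u ⊑ q, where λ(u) is the last element of u. Then ∼ is an equivalence relation on focussed plays. -/
/-- The last entry of a play (list of sets), `λ(p)`. -/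
def Lam {A : Type*} (p : List (Set A)) : Set A := p.getLastD ∅

/-- A focussed play: a list of subsets together with a focus element. -/
structure FPlay (A : Type*) where
  play : List (Set A)
  focus : A

/-- A focussed play is valid if its play is nonempty and its focus belongs to
the last entry of the play. -/
def Valid {A : Type*} (x : FPlay A) : Prop :=
  x.play ≠ [] ∧ x.focus ∈ Lam x.play

/-- `r` is the greatest common prefix of `p` and `q`. -/
def IsGCP {A : Type*} (r p q : List (Set A)) : Prop :=
  r <+: p ∧ r <+: q ∧ ∀ u : List (Set A), u <+: p → u <+: q → u <+: r

/-- The equivalence on focussed plays: equal foci, nonempty greatest common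
prefix, and the focus belongs to the last entry of every play on the path
between the two plays through their greatest common prefix. -/
def FEquiv {A : Type*} (x y : FPlay A) : Prop :=
  x.focus = y.focus ∧ ∃ r : List (Set A), IsGCP r x.play y.play ∧ r ≠ [] ∧
    (∀ u : List (Set A), r <+: u → u <+: x.play → x.focus ∈ Lam u) ∧
    (∀ u : List (Set A), r <+: u → u <+: y.play → x.focus ∈ Lam u)

lemma exists_gcp {A : Type*} : ∀ p q : List (Set A), ∃ r, IsGCP r p q := by
  intro p
  induction p with
  | nil =>
    intro q
    exact ⟨[], List.nil_prefix, List.nil_prefix, fun u hu _ => by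
      simpa [List.prefix_nil] using hu⟩
  | cons a p ih =>
    intro q
    cases q with
    | nil =>
      exact ⟨[], List.nil_prefix, List.nil_prefix, fun u _ hu => by
        simpa [List.prefix_nil] using hu⟩
    | cons b q =>
      by_cases hab : a = b
      · obtain ⟨r, hr1, hr2, hr3⟩ := ih q
        subst hab
        refine ⟨a :: r, List.cons_prefix_cons.2 ⟨rfl, hr1⟩,
          List.cons_prefix_cons.2 ⟨rfl, hr2⟩, ?_⟩
        intro u hu1 hu2
        cases u with
        | nil => exact List.nil_prefix
        | cons c u =>
          obtain ⟨hc, hu1⟩ := List.cons_prefix_cons.1 hu1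
          obtain ⟨_, hu2⟩ := List.cons_prefix_cons.1 hu2
          exact List.cons_prefix_cons.2 ⟨hc, hr3 u hu1 hu2⟩
      · refine ⟨[], List.nil_prefix, List.nil_prefix, ?_⟩
        intro u hu1 hu2
        cases u with
        | nil => exact List.prefix_refl _
        | cons c u =>
          obtain ⟨hc1, _⟩ := List.cons_prefix_cons.1 hu1
          obtain ⟨hc2, _⟩ := List.cons_prefix_cons.1 hu2
          exact absurd (hc1 ▸ hc2) hab

/-- The relation ∼ on focussed plays is an equivalence relation. -/
theorem fequiv_equivalence (A : Type*) :
    Equivalence (fun x y : {z : FPlay A // Valid z} => FEquiv x.1 y.1) := by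
  constructor
  · rintro ⟨x, hx1, hx2⟩
    refine ⟨rfl, x.play, ⟨List.prefix_refl _, List.prefix_refl _, fun u hu _ => hu⟩,
      hx1, ?_, ?_⟩ <;>
    · intro u h1 h2
      have : u = x.play := h2.eq_of_length_le h1.length_le
      rw [this]; exact hx2
  · rintro ⟨x, hx⟩ ⟨y, hy⟩ ⟨hf, r, ⟨h1, h2, h3⟩, hr, hxs, hys⟩
    exact ⟨hf.symm, r, ⟨h2, h1, fun u hu1 hu2 => h3 u hu2 hu1⟩, hr,
      fun u a b => hf ▸ hys u a b, fun u a b => hf ▸ hxs u a b⟩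
  · rintro ⟨x, hx⟩ ⟨y, hy⟩ ⟨z, hz⟩ ⟨hf1, r1, ⟨p11, p12, g1⟩, hr1, hx1, hy1⟩
      ⟨hf2, r2, ⟨p21, p22, g2⟩, hr2, hy2, hz2⟩
    obtain ⟨r, pr1, pr2, gr⟩ := exists_gcp x.play z.play
    refine ⟨hf1.trans hf2, r, ⟨pr1, pr2, gr⟩, ?_, ?_, ?_⟩
    · rcases List.prefix_or_prefix_of_prefix p12 p21 with h | h
      · intro hre
        have := gr r1 p11 (h.trans p22)
        rw [hre, List.prefix_nil] at this
        exact hr1 this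
      · intro hre
        have := gr r2 (h.trans p11) p22
        rw [hre, List.prefix_nil] at this
        exact hr2 this
    · -- u between r and x.play
      intro u hru hux
      rcases List.prefix_or_prefix_of_prefix p12 p21 with h | h
      · -- r1 ⊑ r2, so r1 ⊑ r
        have hr1r : r1 <+: r := gr r1 p11 (h.trans p22)
        exact hx1 u (hr1r.trans hru) hux
      · -- r2 ⊑ r1; u and r1 comparable as prefixes of x.play
        rcases List.prefix_or_prefix_of_prefix hux p11 with h' | h'
        · -- u ⊑ r1 ⊑ y.play; r2 ⊑ r ⊑ u
          have hr2r : r2 <+: r := gr r2 (h.trans p11) p22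
          rw [hf1]
          exact hy2 u (hr2r.trans hru) (h'.trans p12)
        · exact hx1 u h' hux
    · -- u between r and z.play
      intro u hru huz
      rcases List.prefix_or_prefix_of_prefix huz p22 with h' | h'
      · -- u ⊑ r2 ⊑ y.play
        rcases List.prefix_or_prefix_of_prefix p12 p21 with h | h
        · have hr1r : r1 <+: r := gr r1 p11 (h.trans p22)
          exact hy1 u (hr1r.trans hru) (h'.trans p21)
        · have hr2r : r2 <+: r := gr r2 (h.trans p11) p22
          rw [hf1]
          exact hy2 u (hr2r.trans hru) (h'.trans p21)
      · rw [hf1]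
        exact hz2 u h' huz
end

section
/- The elements of each equivalence class of focussed plays under the relation ∼ are tree-ordered by the prefix order on first components; in particular each equivalence class has a least element under the prefix order on first components. -/
/-- The members of each ∼-equivalence class of focussed plays are tree-ordered
by the prefix order on their first components; in particular each class has a
least element under the prefix order. -/
theorem fequiv_class_tree_ordered {A : Type*} (x : FPlay A) (hx : Valid x) :
    (∃ y : FPlay A, Valid y ∧ FEquiv x y ∧
      ∀ z : FPlay A, Valid z → FEquiv x z → y.play <+: z.play) ∧
    (∀ z : FPlay A, Valid z → FEquiv x z →
      ({p : List (Set A) |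
          (∃ w : FPlay A, Valid w ∧ FEquiv x w ∧ w.play = p) ∧
            p <+: z.play}.Finite ∧
        ∀ p q : List (Set A),
          ((∃ w : FPlay A, Valid w ∧ FEquiv x w ∧ w.play = p) ∧ p <+: z.play) →
          ((∃ w : FPlay A, Valid w ∧ FEquiv x w ∧ w.play = q) ∧ q <+: z.play) →
          p <+: q ∨ q <+: p)) := by
  constructor
  · -- least element
    set P : ℕ → Prop := fun n =>
      x.play.take n ≠ [] ∧
        ∀ u : List (Set A), x.play.take n <+: u → u <+: x.play → x.focus ∈ Lam u with hP
    have hPfull : P x.play.length := by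
      refine ⟨by simpa using hx.1, ?_⟩
      intro u hru hux
      have : u = x.play := List.IsPrefix.eq_of_length hux
        (le_antisymm hux.length_le (by simpa using hru.length_le))
      simpa [this] using hx.2
    have hEx : ∃ n, P n := ⟨_, hPfull⟩
    classical
    let n₀ := Nat.find hEx
    have hPn₀ : P n₀ := Nat.find_spec hEx
    have htake : x.play.take n₀ <+: x.play := List.take_prefix _ _
    have hfoc : x.focus ∈ Lam (x.play.take n₀) :=
      hPn₀.2 _ List.prefix_rfl htake
    refine ⟨⟨x.play.take n₀, x.focus⟩, ⟨hPn₀.1, hfoc⟩, ?_, ?_⟩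
    · refine ⟨rfl, x.play.take n₀, ⟨htake, List.prefix_rfl, fun u _ hu => hu⟩,
        hPn₀.1, hPn₀.2, ?_⟩
      intro u hru hur
      have : u = x.play.take n₀ := List.IsPrefix.eq_of_length hur
        (le_antisymm hur.length_le hru.length_le)
      simpa [this] using hfoc
    · intro z hz hxz
      obtain ⟨hfeq, r, ⟨hrx, hrz, _⟩, hrne, hpx, _⟩ := hxz
      have hr : r = x.play.take r.length := by
        obtain ⟨t, ht⟩ := hrx
        simp [← ht, List.take_left]
      have hPr : P r.length := by
        rw [hP]
        refine ⟨by rw [← hr]; exact hrne, ?_⟩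
        intro u hru hux
        exact hpx u (by rwa [← hr] at hru) hux
      have hle : n₀ ≤ r.length := Nat.find_min' hEx hPr
      have h1 : x.play.take n₀ <+: r := by
        rw [hr]
        exact List.prefix_take_iff.mpr ⟨List.take_prefix _ _, by simp; exact Or.inl hle⟩
      exact h1.trans hrz
  · intro z hz hxz
    constructor
    · have hsub : {p : List (Set A) |
          (∃ w : FPlay A, Valid w ∧ FEquiv x w ∧ w.play = p) ∧ p <+: z.play} ⊆
          (fun n => z.play.take n) '' Set.Iic z.play.length := by
        intro p hp
        obtain ⟨-, hpz⟩ := hp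
        refine ⟨p.length, hpz.length_le, ?_⟩
        obtain ⟨t, ht⟩ := hpz
        simp [← ht, List.take_left]
      exact Set.Finite.subset ((Set.finite_Iic _).image _) hsub
    · intro p q hp hq
      exact List.prefix_or_prefix_of_prefix hp.2 hq.2
end

section
/- For each play p = [U₁,…,Uₙ] of guarded sets in A, the set S_p = {⟦p,a⟧ | a ∈ Uₙ} is mapped injectively by the counit ε_A onto Uₙ, and ε_A restricted to S_p preserves and reflects all relations (is an embedding). -/
open FirstOrder

/-- The interpretation of a relation symbol on (representatives of) classes of
focussed plays: the classes have representatives with a common play whose foci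
are related in `A`. -/
def GRel {L : FirstOrder.Language} {A : Type*} [L.Structure A] {n : ℕ}
    (R : L.Relations n) (x : Fin n → FPlay A) : Prop :=
  ∃ (q : List (Set A)) (b : Fin n → A),
    (∀ i, FEquiv (x i) ⟨q, b i⟩) ∧ FirstOrder.Language.Structure.RelMap R b


lemma fequiv_refl_of_mem {A : Type*} (p : List (Set A)) (hp : p ≠ []) (a : A)
    (ha : a ∈ Lam p) : FEquiv (⟨p, a⟩ : FPlay A) ⟨p, a⟩ := by
  refine ⟨rfl, p, ⟨List.prefix_refl p, List.prefix_refl p, fun u h _ => h⟩, hp,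
    ?_, ?_⟩ <;>
  · intro u h1 h2
    have : u = p := h2.sublist.antisymm h1.sublist
    simpa [this] using ha

/-- For each play p of guarded sets, the counit maps the set
S_p = {⟦p,a⟧ | a ∈ λ(p)} injectively onto λ(p), and it preserves and reflects
all relations on S_p (is an embedding). -/
theorem counit_embedding_on_Sp {L : FirstOrder.Language} [L.IsRelational]
    {A : Type*} [L.Structure A] (Gd : Set A → Prop)
    (p : List (Set A)) (hp : p ≠ []) (hg : p.Forall Gd) :
    (∀ a b : A, a ∈ Lam p → b ∈ Lam p →
      (FEquiv (⟨p, a⟩ : FPlay A) ⟨p, b⟩ ↔ a = b)) ∧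
    (∀ (n : ℕ) (R : L.Relations n) (a : Fin n → A), (∀ i, a i ∈ Lam p) →
      (GRel R (fun i => (⟨p, a i⟩ : FPlay A)) ↔
        FirstOrder.Language.Structure.RelMap R a)) := by
  constructor
  · intro a b ha hb
    constructor
    · intro h
      exact h.1
    · rintro rfl
      exact fequiv_refl_of_mem p hp a ha
  · intro n R a ha
    constructor
    · rintro ⟨q, b, hq, hR⟩
      have : a = b := funext fun i => (hq i).1
      rwa [this]
    · intro hR
      exact ⟨p, a, fun i => fequiv_refl_of_mem p hp (a i) (ha i), hR⟩
end

section
/- The triple (G, ε, (·)*) satisfies the comonad-in-Kleisli-form laws: ε_A* = id_{GA}, ε_B ∘ f* = f for every f : GA → B, and (g ∘ f*)* = g* ∘ f* for f : GA → B and g : GB → C. -/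
/-- The play part of the Kleisli coextension: the j-th entry is
V_j = { h ⟦[U₁,…,U_j], a⟧ | a ∈ U_j }. -/
def coextPlay {A B : Type*} (h : FPlay A → B) (p : List (Set A)) :
    List (Set B) :=
  (List.range p.length).map fun j =>
    {b : B | ∃ a : A, a ∈ Lam (p.take (j + 1)) ∧ h ⟨p.take (j + 1), a⟩ = b}

/-- The Kleisli coextension of `h`, on representatives:
h*(⟦[U₁,…,Uₙ],a⟧) = ⟦[V₁,…,Vₙ], h(⟦[U₁,…,Uₙ],a⟧)⟧. -/
def coext {A B : Type*} (h : FPlay A → B) (x : FPlay A) : FPlay B :=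
  ⟨coextPlay h x.play, h x⟩



lemma Lam_eq {A : Type*} (p : List (Set A)) : Lam p = p.getD (p.length - 1) ∅ := by
  unfold Lam
  cases p with
  | nil => rfl
  | cons a l =>
    rw [List.getLastD_eq_getLast?, List.getLast?_eq_getElem?, List.getD_eq_getElem?_getD]

lemma Lam_take {A : Type*} (p : List (Set A)) (j : ℕ) (hj : j < p.length) :
    Lam (p.take (j + 1)) = p[j] := by
  rw [Lam_eq]
  simp [List.length_take, Nat.min_eq_left (by omega : j + 1 ≤ p.length),
    List.getD_eq_getElem?_getD, List.getElem?_take, hj, List.getElem?_eq_getElem hj]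

lemma coextPlay_length {A B : Type*} (h : FPlay A → B) (p : List (Set A)) :
    (coextPlay h p).length = p.length := by simp [coextPlay]

lemma coextPlay_getElem {A B : Type*} (h : FPlay A → B) (p : List (Set A)) (j : ℕ)
    (hj : j < (coextPlay h p).length) :
    (coextPlay h p)[j] =
      {b : B | ∃ a : A, a ∈ Lam (p.take (j + 1)) ∧ h ⟨p.take (j + 1), a⟩ = b} := by
  simp [coextPlay]

lemma coextPlay_take {A B : Type*} (h : FPlay A → B) (p : List (Set A)) (j : ℕ) :
    (coextPlay h p).take j = coextPlay h (p.take j) := by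
  apply List.ext_getElem
  · simp [coextPlay]
  intro i h1 h2
  have hi : i < j ∧ i < p.length := by simpa [coextPlay] using h2
  rw [List.getElem_take, coextPlay_getElem, coextPlay_getElem,
    List.take_take, Nat.min_eq_left (by omega)]

lemma Lam_coextPlay {A B : Type*} (h : FPlay A → B) (p : List (Set A)) (hp : p ≠ []) :
    Lam (coextPlay h p) = {b : B | ∃ a : A, a ∈ Lam p ∧ h ⟨p, a⟩ = b} := by
  have hl : 0 < p.length := List.length_pos_iff.mpr hp
  have hj : p.length - 1 < (coextPlay h p).length := by rw [coextPlay_length]; omega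
  rw [Lam_eq, coextPlay_length, List.getD_eq_getElem?_getD, List.getElem?_eq_getElem hj,
    Option.getD_some, coextPlay_getElem, show p.length - 1 + 1 = p.length by omega,
    List.take_length]

lemma fequiv_refl {A : Type*} (x : FPlay A) (hx : Valid x) : FEquiv x x := by
  refine ⟨rfl, x.play, ⟨List.prefix_refl _, List.prefix_refl _, fun u hu _ => hu⟩,
    hx.1, ?_, ?_⟩ <;>
  · intro u hr hu
    have : u = x.play := hu.eq_of_length (le_antisymm hu.length_le hr.length_le)
    rw [this]; exact hx.2

lemma coextPlay_eps {A : Type*} (p : List (Set A)) :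
    coextPlay (fun y : FPlay A => y.focus) p = p := by
  apply List.ext_getElem
  · exact coextPlay_length _ p
  intro i h1 h2
  rw [coextPlay_getElem, Lam_take p i h2]
  ext b
  simp

lemma coextPlay_comp {A B C : Type*} (f : FPlay A → B) (g : FPlay B → C)
    (p : List (Set A)) :
    coextPlay (fun y : FPlay A => g (coext f y)) p = coextPlay g (coextPlay f p) := by
  apply List.ext_getElem
  · simp [coextPlay_length]
  intro i h1 h2
  have hip : i < p.length := by simpa [coextPlay_length] using h2
  have hne : p.take (i + 1) ≠ [] := by
    intro h; have h' := congrArg List.length h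
    rw [List.length_take] at h'
    simp only [List.length_nil] at h'
    omega
  rw [coextPlay_getElem, coextPlay_getElem, coextPlay_take,
    Lam_coextPlay f _ hne]
  ext c
  constructor
  · rintro ⟨a, ha, rfl⟩
    exact ⟨f ⟨p.take (i + 1), a⟩, ⟨a, ha, rfl⟩, rfl⟩
  · rintro ⟨b, ⟨a, ha, rfl⟩, rfl⟩
    exact ⟨a, ha, rfl⟩

/-- The comonad-in-Kleisli-form laws, on representatives: ε* = id,
ε ∘ f* = f, and (g ∘ f*)* = g* ∘ f* (equalities of classes are expressed via
the equivalence ∼ on focussed plays). -/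
theorem guarded_comonad_kleisli_laws {A B C : Type*} :
    (∀ x : FPlay A, Valid x →
      FEquiv (coext (fun y : FPlay A => y.focus) x) x) ∧
    (∀ (f : FPlay A → B) (x : FPlay A), (coext f x).focus = f x) ∧
    (∀ (f : FPlay A → B) (g : FPlay B → C) (x : FPlay A), Valid x →
      FEquiv (coext (fun y : FPlay A => g (coext f y)) x)
        (coext g (coext f x))) := by
  refine ⟨?_, fun f x => rfl, ?_⟩
  · intro x hx
    have : coext (fun y : FPlay A => y.focus) x = x := by
      show (⟨coextPlay _ x.play, x.focus⟩ : FPlay A) = x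
      rw [coextPlay_eps]
    rw [this]
    exact fequiv_refl x hx
  · intro f g x hx
    have hpl : coext (fun y : FPlay A => g (coext f y)) x = coext g (coext f x) := by
      show (⟨coextPlay _ x.play, _⟩ : FPlay C) = ⟨coextPlay g (coextPlay f x.play), _⟩
      rw [coextPlay_comp]
    rw [hpl]
    apply fequiv_refl
    constructor
    · show coextPlay g (coextPlay f x.play) ≠ []
      intro h
      have := congrArg List.length h
      rw [coextPlay_length, coextPlay_length] at this
      exact hx.1 (List.length_eq_zero_iff.mp this)
    · show g (coext f x) ∈ Lam (coextPlay g (coextPlay f x.play))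
      have hne : coextPlay f x.play ≠ [] := by
        intro h
        have := congrArg List.length h
        rw [coextPlay_length] at this
        exact hx.1 (List.length_eq_zero_iff.mp this)
      rw [Lam_coextPlay g _ hne]
      refine ⟨f x, ?_, rfl⟩
      show (coext f x).focus ∈ Lam (coext f x).play
      rw [show (coext f x).play = coextPlay f x.play from rfl, Lam_coextPlay f _ hx.1]
      exact ⟨x.focus, hx.2, rfl⟩
end

section
/- Let τ be a guarded decomposition of a structure A with image P_τ (a sub-forest of the prefix order on plays). If p, q ∈ P_τ and λ(p) ⊆ λ(q), then p ⊑ q. In particular, the last-element map λ is injective on P_τ. -/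
open FirstOrder

/-- Gaifman adjacency: two distinct elements co-occurring in a related tuple. -/
def GaifAdj (L : FirstOrder.Language) (A : Type*) [L.Structure A]
    (a b : A) : Prop :=
  a ≠ b ∧ ∃ (n : ℕ) (R : L.Relations n) (t : Fin n → A),
    FirstOrder.Language.Structure.RelMap R t ∧ a ∈ Set.range t ∧ b ∈ Set.range t

/-- A guarded decomposition of `A` (with guarded sets given by `Gd`):
a map τ from elements to plays of guarded sets that is reflexive, edge
covering, minimal and vertex connected. -/
def IsGDecomp (L : FirstOrder.Language) (A : Type*) [L.Structure A]
    (Gd : Set A → Prop) (τ : A → List (Set A)) : Prop :=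
  (∀ a : A, τ a ≠ [] ∧ (τ a).Forall Gd) ∧
  (∀ a : A, a ∈ Lam (τ a)) ∧
  (∀ a b : A, GaifAdj L A a b → ∃ c : A, a ∈ Lam (τ c) ∧ b ∈ Lam (τ c)) ∧
  (∀ (a : A) (q : List (Set A)), q ≠ [] → q.Forall Gd →
    FEquiv (⟨τ a, a⟩ : FPlay A) ⟨q, a⟩ → τ a <+: q) ∧
  (∀ (q : List (Set A)) (c a : A), q ≠ [] → q <+: τ c → a ∈ Lam q →
    FEquiv (⟨τ a, a⟩ : FPlay A) ⟨q, a⟩)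


/-- In a guarded decomposition, if λ(p) ⊆ λ(q) for p, q ∈ P_τ then p ⊑ q;
in particular λ is injective on P_τ. -/
theorem decomp_lam_mono_injective {L : FirstOrder.Language} [L.IsRelational]
    {A : Type*} [L.Structure A] (Gd : Set A → Prop)
    (τ : A → List (Set A)) (hτ : IsGDecomp L A Gd τ) :
    (∀ p q : List (Set A), p ∈ Set.range τ → q ∈ Set.range τ →
      Lam p ⊆ Lam q → p <+: q) ∧
    (∀ p q : List (Set A), p ∈ Set.range τ → q ∈ Set.range τ →
      Lam p = Lam q → p = q) := by
  obtain ⟨hG, hrefl, -, hmin, hvc⟩ := hτ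
  have mono : ∀ p q : List (Set A), p ∈ Set.range τ → q ∈ Set.range τ →
      Lam p ⊆ Lam q → p <+: q := by
    rintro - - ⟨a, rfl⟩ ⟨b, rfl⟩ hsub
    exact hmin a (τ b) (hG b).1 (hG b).2
      (hvc (τ b) b a (hG b).1 (List.prefix_refl _) (hsub (hrefl a)))
  refine ⟨mono, fun p q hp hq h => ?_⟩
  exact (mono p q hp hq h.le).eq_of_length_le (mono q p hq hp h.ge).length_le
end

section
/- Let τ be a guarded decomposition of A. If p, q ∈ P_τ and a ∈ λ(p) ∩ λ(q), then the meet p ∧ q exists in P_τ and a ∈ λ(p ∧ q). -/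
open FirstOrder

/-- In a guarded decomposition, if a ∈ λ(p) ∩ λ(q) for p, q ∈ P_τ, then the
meet p ∧ q exists in P_τ and a ∈ λ(p ∧ q). -/
theorem decomp_meet_exists {L : FirstOrder.Language} [L.IsRelational]
    {A : Type*} [L.Structure A] (Gd : Set A → Prop)
    (τ : A → List (Set A)) (hτ : IsGDecomp L A Gd τ)
    (p q : List (Set A)) (hp : p ∈ Set.range τ) (hq : q ∈ Set.range τ)
    (a : A) (ha : a ∈ Lam p ∩ Lam q) :
    ∃ m ∈ Set.range τ, m <+: p ∧ m <+: q ∧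
      (∀ r ∈ Set.range τ, r <+: p → r <+: q → r <+: m) ∧ a ∈ Lam m := by
  obtain ⟨b, rfl⟩ := hp
  obtain ⟨c, rfl⟩ := hq
  obtain ⟨h1, h2, h3, h4, h5⟩ := hτ
  obtain ⟨hap, haq⟩ := ha
  have hfp := h5 (τ b) b a (h1 b).1 (List.prefix_refl _) hap
  have hfq := h5 (τ c) c a (h1 c).1 (List.prefix_refl _) haq
  have htap : τ a <+: τ b := h4 a (τ b) (h1 b).1 (h1 b).2 hfp
  have htaq : τ a <+: τ c := h4 a (τ c) (h1 c).1 (h1 c).2 hfq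
  obtain ⟨-, r, ⟨hr1, hr2, hr3⟩, hrne, hpath1, hpath2⟩ := hfp
  have hrta : r = τ a := hr1.eq_of_length (Nat.le_antisymm hr1.length_le
    (hr3 (τ a) (List.prefix_refl _) htap).length_le)
  subst hrta
  -- the set of lengths of common prefixes of τ b and τ c lying in the range of τ
  set T : Set ℕ := {k | (∃ d, (τ b).take k = τ d) ∧ (τ b).take k <+: τ c ∧
    k ≤ (τ b).length} with hT
  have hmemT : ∀ u : List (Set A), (∃ d, u = τ d) → u <+: τ b → u <+: τ c →
      u.length ∈ T ∧ (τ b).take u.length = u := by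
    intro u hd hub huc
    have htake : (τ b).take u.length = u := (List.prefix_iff_eq_take.mp hub).symm
    refine ⟨⟨?_, ?_, hub.length_le⟩, htake⟩
    · obtain ⟨d, hd⟩ := hd
      exact ⟨d, by rw [htake, hd]⟩
    · rw [htake]; exact huc
  have haT := hmemT (τ a) ⟨a, rfl⟩ htap htaq
  have hTne : T.Nonempty := ⟨_, haT.1⟩
  have hTbdd : BddAbove T := ⟨(τ b).length, fun k hk => hk.2.2⟩
  set n : ℕ := sSup T with hn
  have hnT : n ∈ T := Nat.sSup_mem hTne hTbdd
  set m : List (Set A) := (τ b).take n with hm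
  have hmb : m <+: τ b := List.take_prefix _ _
  have hmlen : m.length = n := by
    rw [hm, List.length_take, min_eq_left hnT.2.2]
  have hle : ∀ u : List (Set A), u <+: τ b → u.length ≤ n → u <+: m := by
    intro u hub hun
    exact List.prefix_of_prefix_length_le hub hmb (by omega)
  have hram : τ a <+: m := by
    refine hle _ htap ?_
    have := le_csSup hTbdd haT.1
    rw [hn]
    exact this
  have hmrange : m ∈ Set.range τ := by
    obtain ⟨d, hd⟩ := hnT.1
    exact ⟨d, hd.symm⟩
  refine ⟨m, hmrange, hmb, hnT.2.1, ?_, hpath2 m hram hmb⟩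
  intro r' hr' hr'b hr'c
  obtain ⟨hTr', htk⟩ := hmemT r' (by obtain ⟨d, hd⟩ := hr'; exact ⟨d, hd.symm⟩) hr'b hr'c
  refine hle _ hr'b ?_
  have := le_csSup hTbdd hTr'
  rw [hn]
  exact this
end

section
/- Let τ be a guarded decomposition of a σ-structure A. Then every clique in the Gaifman graph of A is contained in λ(p) for some p ∈ P_τ. Consequently every maximal guarded subset of A equals λ(p) for some p ∈ P_τ, and every Gaifman clique of A is guarded. -/
open FirstOrder

/-- A clique in the Gaifman graph of A. -/
def IsGaifClique (L : FirstOrder.Language) (A : Type*) [L.Structure A]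
    (C : Set A) : Prop :=
  ∀ a ∈ C, ∀ b ∈ C, a ≠ b → GaifAdj L A a b

/-- If A has a guarded decomposition, then every Gaifman clique of A is
contained in λ(p) for some p ∈ P_τ; consequently every maximal guarded subset
equals λ(p) for some p ∈ P_τ, and every Gaifman clique is guarded. -/
theorem decomp_clique_covered {L : FirstOrder.Language} [L.IsRelational]
    {A : Type*} [Nonempty A] [L.Structure A] (Gd : Set A → Prop)
    (hGdFin : ∀ X : Set A, Gd X → X.Finite)
    (hGdClique : ∀ X : Set A, Gd X → IsGaifClique L A X)
    (hGdSub : ∀ X Y : Set A, Gd X → Y ⊆ X → Gd Y)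
    (τ : A → List (Set A)) (hτ : IsGDecomp L A Gd τ) :
    (∀ C : Set A, C.Finite → IsGaifClique L A C → ∃ c : A, C ⊆ Lam (τ c)) ∧
    (∀ X : Set A, Gd X → (∀ Y : Set A, Gd Y → X ⊆ Y → Y = X) →
      ∃ c : A, X = Lam (τ c)) ∧
    (∀ C : Set A, C.Finite → IsGaifClique L A C → Gd C) := by
  obtain ⟨hne, hrefl, hedge, hmin, hconn⟩ := hτ
  have hGdLam : ∀ c : A, Gd (Lam (τ c)) := by
    intro c
    have h1 := (hne c).1
    have h2 := (hne c).2
    rw [List.forall_iff_forall_mem] at h2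
    have heq : Lam (τ c) = (τ c).getLast h1 := by
      simp [Lam, List.getLastD_eq_getLast?, List.getLast?_eq_getLast h1]
    rw [heq]
    exact h2 _ (List.getLast_mem h1)
  have key : ∀ (a c : A) (q : List (Set A)), q ≠ [] → q <+: τ c → a ∈ Lam q →
      τ a <+: q ∧ ∀ u, τ a <+: u → u <+: q → a ∈ Lam u := by
    intro a c q hq hqc haq
    have hfe := hconn q c a hq hqc haq
    have hqGd : q.Forall Gd := by
      rw [List.forall_iff_forall_mem]
      intro x hx
      have h2 := (hne c).2
      rw [List.forall_iff_forall_mem] at h2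
      exact h2 x (hqc.subset hx)
    refine ⟨hmin a q hq hqGd hfe, ?_⟩
    obtain ⟨-, r, ⟨hr1, hr2, hr3⟩, hrne, hx, hy⟩ := hfe
    intro u hau huq
    exact hy u (hr1.trans hau) huq
  have part1 : ∀ C : Set A, C.Finite → IsGaifClique L A C → ∃ c : A, C ⊆ Lam (τ c) := by
    intro C hCfin hC
    rcases C.eq_empty_or_nonempty with rfl | hCne
    · exact ⟨Classical.arbitrary A, by simp⟩
    obtain ⟨m, hmC, hmax⟩ := Set.Finite.exists_maximalFor (fun a => (τ a).length) C hCfin hCne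
    refine ⟨m, fun a haC => ?_⟩
    by_cases ham : a = m
    · subst ham; exact hrefl a
    obtain ⟨c, hac, hmc⟩ := hedge a m (hC a haC m hmC ham)
    have h1 := key a c (τ c) (hne c).1 List.prefix_rfl hac
    have h2 := key m c (τ c) (hne c).1 List.prefix_rfl hmc
    have ham2 : τ a <+: τ m := by
      rcases List.prefix_or_prefix_of_prefix h1.1 h2.1 with h | h
      · exact h
      · have hl := le_antisymm h.length_le (hmax haC h.length_le)
        rw [h.eq_of_length hl]
    exact h1.2 (τ m) ham2 h2.1
  refine ⟨part1, ?_, ?_⟩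
  · intro X hX hmaxX
    obtain ⟨c, hc⟩ := part1 X (hGdFin X hX) (hGdClique X hX)
    exact ⟨c, (hmaxX _ (hGdLam c) hc).symm⟩
  · intro C hCfin hC
    obtain ⟨c, hc⟩ := part1 C hCfin hC
    exact hGdSub _ _ (hGdLam c) hc
end

section
/- If a σ-structure A admits a guarded decomposition τ, then the number of maximal guarded subsets of A is at most the cardinality of A (the map a ↦ λ(τ(a)) is surjective onto the maximal guarded sets). -/
open FirstOrder

lemma lam_mem {A : Type*} {p : List (Set A)} (h : p ≠ []) : Lam p ∈ p := by
  unfold Lam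
  rw [List.getLastD_eq_getLast?, List.getLast?_eq_getLast h]
  exact List.getLast_mem h

lemma gd_lam {A : Type*} {Gd : Set A → Prop} {p : List (Set A)}
    (h : p ≠ []) (hf : p.Forall Gd) : Gd (Lam p) :=
  (List.forall_iff_forall_mem.mp hf) _ (lam_mem h)

/-- Key consequence of minimality + vertex connectedness: if `a` lies in the
last entry of a nonempty prefix `q` of some `τ c`, then `τ a` is a prefix of `q`
and `a` lies in the last entry of every play between `τ a` and `q`. -/
lemma decomp_star {L : FirstOrder.Language} {A : Type*} [L.Structure A]
    {Gd : Set A → Prop} {τ : A → List (Set A)} (hτ : IsGDecomp L A Gd τ)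
    {a c : A} {q : List (Set A)} (hq : q ≠ []) (hqc : q <+: τ c)
    (ha : a ∈ Lam q) :
    τ a <+: q ∧ ∀ u, τ a <+: u → u <+: q → a ∈ Lam u := by
  obtain ⟨h1, h2, h3, hmin, hvc⟩ := hτ
  have hfe := hvc q c a hq hqc ha
  have hqGd : q.Forall Gd := by
    rw [List.forall_iff_forall_mem]
    intro x hx
    exact (List.forall_iff_forall_mem.mp (h1 c).2) x (hqc.subset hx)
  have hpre : τ a <+: q := hmin a q hq hqGd hfe
  obtain ⟨-, r, ⟨hr1, hr2, hr3⟩, -, -, h5⟩ := hfe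
  have hra : r = τ a :=
    hr1.sublist.antisymm (hr3 (τ a) List.prefix_rfl hpre).sublist
  refine ⟨hpre, fun u h4 h6 => h5 u ?_ h6⟩
  rw [hra]; exact h4

/-- If A admits a guarded decomposition, the map a ↦ λ(τ(a)) is surjective onto
the maximal guarded subsets of A, and hence there are at most |A| of them. -/
theorem decomp_maxGuarded_card {L : FirstOrder.Language} [L.IsRelational]
    {A : Type*} [Nonempty A] [L.Structure A] (Gd : Set A → Prop)
    (hGdFin : ∀ X : Set A, Gd X → X.Finite)
    (hGdClique : ∀ X : Set A, Gd X → IsGaifClique L A X)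
    (hGdSub : ∀ X Y : Set A, Gd X → Y ⊆ X → Gd Y)
    (τ : A → List (Set A)) (hτ : IsGDecomp L A Gd τ) :
    (∀ X : Set A, Gd X → (∀ Y : Set A, Gd Y → X ⊆ Y → Y = X) →
      ∃ a : A, Lam (τ a) = X) ∧
    Cardinal.mk {X : Set A // Gd X ∧ ∀ Y : Set A, Gd Y → X ⊆ Y → Y = X} ≤
      Cardinal.mk A := by
  obtain ⟨h1, h2, h3, hmin, hvc⟩ := hτ
  have hτ' : IsGDecomp L A Gd τ := ⟨h1, h2, h3, hmin, hvc⟩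
  have part1 : ∀ X : Set A, Gd X → (∀ Y : Set A, Gd Y → X ⊆ Y → Y = X) →
      ∃ a : A, Lam (τ a) = X := by
    intro X hX hmax
    rcases Set.eq_empty_or_nonempty X with hXe | hXne
    · -- impossible: any a witnesses a nonempty guarded set containing ∅
      exfalso
      obtain ⟨a⟩ := ‹Nonempty A›
      have hGdL : Gd (Lam (τ a)) := gd_lam (h1 a).1 (h1 a).2
      have := hmax (Lam (τ a)) hGdL (by rw [hXe]; exact Set.empty_subset _)
      have ha := h2 a
      rw [this, hXe] at ha
      exact ha
    · have hfin := hGdFin X hX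
      obtain ⟨m, hm, hmm⟩ : ∃ m ∈ X, ∀ a ∈ X,
          (τ m).length ≤ (τ a).length → (τ m).length = (τ a).length := by
        obtain ⟨m, hm, hmm⟩ := Set.Finite.exists_maximalFor (fun a => (τ a).length) X hfin hXne
        exact ⟨m, hm, fun a ha h => le_antisymm h (hmm ha h)⟩
      refine ⟨m, hmax _ (gd_lam (h1 m).1 (h1 m).2) ?_⟩
      intro a ha
      by_cases ham : a = m
      · subst ham; exact h2 a
      · have adj := hGdClique X hX a ha m hm ham
        obtain ⟨c, hac, hmc⟩ := h3 a m adj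
        obtain ⟨hpa, hpa'⟩ := decomp_star hτ' (h1 c).1 List.prefix_rfl hac
        obtain ⟨hpm, -⟩ := decomp_star hτ' (h1 c).1 List.prefix_rfl hmc
        rcases List.prefix_or_prefix_of_prefix hpa hpm with hcmp | hcmp
        · exact hpa' (τ m) hcmp hpm
        · have hlen : (τ m).length = (τ a).length :=
            hmm a ha hcmp.length_le
          have : τ m = τ a := hcmp.eq_of_length hlen
          rw [this]
          exact h2 a
  classical
  refine ⟨part1, ?_⟩
  by_cases hne :
      Nonempty {X : Set A // Gd X ∧ ∀ Y : Set A, Gd Y → X ⊆ Y → Y = X}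
  · set S := {X : Set A // Gd X ∧ ∀ Y : Set A, Gd Y → X ⊆ Y → Y = X}
    have x0 : S := Classical.choice hne
    have hsurj : Function.Surjective (fun a : A =>
        if h : Gd (Lam (τ a)) ∧ ∀ Y : Set A, Gd Y → Lam (τ a) ⊆ Y →
          Y = Lam (τ a) then (⟨Lam (τ a), h⟩ : S) else x0) := by
      rintro ⟨X, hX1, hX2⟩
      obtain ⟨a, ha⟩ := part1 X hX1 hX2
      refine ⟨a, ?_⟩
      have hcond : Gd (Lam (τ a)) ∧ ∀ Y : Set A, Gd Y → Lam (τ a) ⊆ Y →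
          Y = Lam (τ a) := by rw [ha]; exact ⟨hX1, hX2⟩
      simp only [dif_pos hcond]
      exact Subtype.ext ha
    exact Cardinal.mk_le_of_surjective hsurj
  · rw [not_nonempty_iff] at hne
    simp [Cardinal.mk_eq_zero]
end

section
/- A finite simple graph (viewed as a σ-structure with one binary symmetric edge relation) admits an atom-guarded decomposition if and only if it is acyclic (a forest). -/
/-- A guarded decomposition of a simple graph (guarded sets given by Gd,
adjacency by G): reflexive, edge covering, minimal and vertex connected. -/
def IsGDecompGraph {V : Type*} (G : SimpleGraph V) (Gd : Set V → Prop)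
    (τ : V → List (Set V)) : Prop :=
  (∀ a : V, τ a ≠ [] ∧ (τ a).Forall Gd) ∧
  (∀ a : V, a ∈ Lam (τ a)) ∧
  (∀ a b : V, G.Adj a b → ∃ c : V, a ∈ Lam (τ c) ∧ b ∈ Lam (τ c)) ∧
  (∀ (a : V) (q : List (Set V)), q ≠ [] → q.Forall Gd →
    FEquiv (⟨τ a, a⟩ : FPlay V) ⟨q, a⟩ → τ a <+: q) ∧
  (∀ (q : List (Set V)) (c a : V), q ≠ [] → q <+: τ c → a ∈ Lam q →
    FEquiv (⟨τ a, a⟩ : FPlay V) ⟨q, a⟩)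

/-- The atom-guarded sets of a simple graph: subsets of the supports of edges,
together with subsets of singletons (guarded by equality atoms). -/
def GraphGuarded {V : Type*} (G : SimpleGraph V) (X : Set V) : Prop :=
  (∃ a b : V, G.Adj a b ∧ X ⊆ {a, b}) ∨ ∃ a : V, X ⊆ {a}



open SimpleGraph List

namespace GDaux

variable {V : Type*} (G : SimpleGraph V)

attribute [local instance] Classical.decEq

/-- The set of elements of an unordered pair. -/
def eS (e : Sym2 V) : Set V := {x | x ∈ e}

lemma eS_mk (u v : V) : eS (s(u, v)) = {u, v} := by
  ext x; simp [eS, Sym2.mem_iff, Set.mem_insert_iff]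

noncomputable def groot (a : V) : V := (G.connectedComponentMk a).out

lemma reachable_groot (a : V) : G.Reachable (groot G a) a :=
  SimpleGraph.ConnectedComponent.exact (Quot.out_eq _)

lemma groot_eq_of_reachable {a b : V} (h : G.Reachable a b) :
    groot G a = groot G b := by
  unfold groot
  rw [SimpleGraph.ConnectedComponent.sound h]

noncomputable def gpath (a : V) : G.Path (groot G a) a :=
  (reachable_groot G a).some.toPath

noncomputable def gtau (a : V) : List (Set V) :=
  {groot G a} :: ((gpath G a : G.Walk (groot G a) a).edges.map eS)

lemma gtau_ne_nil (a : V) : gtau G a ≠ [] := by simp [gtau]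

lemma gpath_unique (hG : G.IsAcyclic) {a : V} (w : G.Walk (groot G a) a)
    (hw : w.IsPath) : w = (gpath G a : G.Walk (groot G a) a) :=
  congrArg Subtype.val (hG.path_unique ⟨w, hw⟩ (gpath G a))

lemma groot_eq_of_edges_nil {a : V}
    (h : (gpath G a : G.Walk (groot G a) a).edges = []) : groot G a = a :=
  SimpleGraph.Walk.eq_of_length_eq_zero
    (by rw [← SimpleGraph.Walk.length_edges, h]; rfl)

lemma gtau_of_root (hG : G.IsAcyclic) {a : V} (h : groot G a = a) :
    gtau G a = [{a}] := by
  have hw : ((SimpleGraph.Walk.nil : G.Walk a a).copy h.symm rfl).IsPath := by simp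
  have := gpath_unique G hG _ hw
  unfold gtau
  rw [← this]
  simp [h]

lemma gtau_concat (hG : G.IsAcyclic) {a : V}
    (h : (gpath G a : G.Walk (groot G a) a).edges ≠ []) :
    ∃ p, G.Adj p a ∧ gtau G a = gtau G p ++ [eS (s(p, a))] := by
  have hw : (gpath G a : G.Walk (groot G a) a).IsPath := (gpath G a).2
  have hnn : ¬ (gpath G a : G.Walk (groot G a) a).Nil := by
    rw [SimpleGraph.Walk.nil_iff_length_eq, ← SimpleGraph.Walk.length_edges]
    simp only [List.length_eq_zero_iff]
    exact h
  obtain ⟨u, hadj, q, heq⟩ := SimpleGraph.Walk.not_nil_iff.mp hnn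
  obtain ⟨x, q', hx, hcq⟩ := SimpleGraph.Walk.exists_cons_eq_concat hadj q
  have heq2 : (gpath G a : G.Walk (groot G a) a) = q'.concat hx := by
    rw [heq, hcq]
  have hq' : q'.IsPath := by
    rw [heq2] at hw
    rw [SimpleGraph.Walk.isPath_def] at hw ⊢
    rw [SimpleGraph.Walk.support_concat] at hw
    exact hw.of_append_left
  have hgr : groot G x = groot G a := groot_eq_of_reachable G hx.reachable
  have h5 : q'.copy hgr.symm rfl = (gpath G x : G.Walk (groot G x) x) :=
    gpath_unique G hG _ (by simpa using hq')
  refine ⟨x, hx, ?_⟩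
  unfold gtau
  rw [← h5, SimpleGraph.Walk.edges_copy, heq2, SimpleGraph.Walk.edges_concat, hgr]
  simp [List.concat_eq_append]

lemma Lam_concat (l : List (Set V)) (s : Set V) : Lam (l ++ [s]) = s := by
  simp [Lam, List.getLastD_concat]

lemma Lam_singleton (s : Set V) : Lam [s] = s := rfl

lemma mem_Lam_gtau (hG : G.IsAcyclic) (a : V) : a ∈ Lam (gtau G a) := by
  by_cases h : (gpath G a : G.Walk (groot G a) a).edges = []
  · rw [gtau_of_root G hG (groot_eq_of_edges_nil G h), Lam_singleton]
    rfl
  · obtain ⟨p, hp, heq⟩ := gtau_concat G hG h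
    rw [heq, Lam_concat, eS_mk]
    right; rfl

lemma mem_Lam_cases (hG : G.IsAcyclic) {a d : V} (h : a ∈ Lam (gtau G d)) :
    gtau G a = gtau G d ∨ gtau G d = gtau G a ++ [Lam (gtau G d)] := by
  by_cases hnil : (gpath G d : G.Walk (groot G d) d).edges = []
  · have hr := groot_eq_of_edges_nil G hnil
    rw [gtau_of_root G hG hr, Lam_singleton] at h
    have : a = d := h
    subst this
    left; rfl
  · obtain ⟨p, hp, heq⟩ := gtau_concat G hG hnil
    rw [heq, Lam_concat, eS_mk] at h
    rcases h with h | h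
    · have : a = p := h
      subst this
      right
      rw [heq, Lam_concat]
    · have : a = d := h
      subst this
      left; rfl

lemma prefix_gtau (hG : G.IsAcyclic) :
    ∀ (n : ℕ) (c : V) (q : List (Set V)), (gtau G c).length ≤ n → q ≠ [] →
      q <+: gtau G c → ∃ d, q = gtau G d := by
  intro n
  induction n with
  | zero => intro c q hlen _ _; exact absurd hlen (by simp [gtau])
  | succ n ih =>
    intro c q hlen hq hpre
    by_cases hfull : q.length = (gtau G c).length
    · exact ⟨c, hpre.eq_of_length hfull⟩
    by_cases hnil : (gpath G c : G.Walk (groot G c) c).edges = []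
    · exfalso
      apply hfull
      have h1 : q.length ≤ (gtau G c).length := hpre.length_le
      have h2 : 1 ≤ q.length := by
        cases q with
        | nil => exact absurd rfl hq
        | cons x l => simp
      rw [gtau_of_root G hG (groot_eq_of_edges_nil G hnil)] at h1 ⊢
      simp at h1 ⊢
      omega
    · obtain ⟨p, hp, heq⟩ := gtau_concat G hG hnil
      have hlt : q.length < (gtau G c).length :=
        lt_of_le_of_ne hpre.length_le hfull
      have hple : q.length ≤ (gtau G p).length := by
        rw [heq] at hlt; simp at hlt; omega
      have hpre' : q <+: gtau G p := by
        rw [heq] at hpre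
        exact List.prefix_of_prefix_length_le hpre (List.prefix_append _ _) hple
      have hn : (gtau G p).length ≤ n := by
        rw [heq] at hlen; simp at hlen; omega
      exact ih p q hn hq hpre'

lemma edge_cover (hG : G.IsAcyclic) {a b : V} (hab : G.Adj a b) :
    ∃ c, a ∈ Lam (gtau G c) ∧ b ∈ Lam (gtau G c) := by
  by_cases hb : b ∈ (gpath G a : G.Walk (groot G a) a).support
  · -- a's path passes through b, so τ a = τ b ++ [{b,a}]
    have hw : (gpath G a : G.Walk (groot G a) a).IsPath := (gpath G a).2
    have h1 : ((gpath G a : G.Walk (groot G a) a).takeUntil b hb).IsPath :=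
      hw.takeUntil hb
    have h2 : ((gpath G a : G.Walk (groot G a) a).dropUntil b hb).IsPath :=
      hw.dropUntil hb
    have hsingle : (SimpleGraph.Walk.cons hab.symm SimpleGraph.Walk.nil :
        G.Walk b a).IsPath := by
      simp [SimpleGraph.Walk.isPath_def, hab.ne']
    have h3 : (gpath G a : G.Walk (groot G a) a).dropUntil b hb
        = SimpleGraph.Walk.cons hab.symm SimpleGraph.Walk.nil :=
      congrArg Subtype.val (hG.path_unique ⟨_, h2⟩ ⟨_, hsingle⟩)
    have h4 : (gpath G a : G.Walk (groot G a) a)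
        = ((gpath G a : G.Walk (groot G a) a).takeUntil b hb).concat hab.symm := by
      conv_lhs => rw [← SimpleGraph.Walk.take_spec _ hb]
      rw [h3, SimpleGraph.Walk.concat_eq_append]
    have hgr : groot G b = groot G a :=
      groot_eq_of_reachable G hab.symm.reachable
    have h5 : ((gpath G a : G.Walk (groot G a) a).takeUntil b hb).copy hgr.symm rfl
        = (gpath G b : G.Walk (groot G b) b) :=
      gpath_unique G hG _ (by simpa using h1)
    have h6 : gtau G a = gtau G b ++ [eS (s(b, a))] := by
      unfold gtau
      rw [← h5, SimpleGraph.Walk.edges_copy]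
      conv_lhs => rw [h4]
      rw [SimpleGraph.Walk.edges_concat, hgr]
      simp [List.concat_eq_append]
    refine ⟨a, ?_, ?_⟩ <;> rw [h6, Lam_concat, eS_mk]
    · right; rfl
    · left; rfl
  · have hgr : groot G b = groot G a :=
      groot_eq_of_reachable G hab.symm.reachable
    have hwp : ((gpath G a : G.Walk (groot G a) a).concat hab).IsPath := by
      rw [SimpleGraph.Walk.isPath_def, SimpleGraph.Walk.support_concat]
      rw [List.nodup_append]
      exact ⟨(gpath G a).2.support_nodup, List.nodup_singleton _,
        by intro x hx y hy h; simp at hy; subst hy; exact hb (h ▸ hx)⟩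
    have h5 : ((gpath G a : G.Walk (groot G a) a).concat hab).copy hgr.symm rfl
        = (gpath G b : G.Walk (groot G b) b) :=
      gpath_unique G hG _ (by simpa using hwp)
    have h6 : gtau G b = gtau G a ++ [eS (s(a, b))] := by
      unfold gtau
      rw [← h5, SimpleGraph.Walk.edges_copy, SimpleGraph.Walk.edges_concat, hgr]
      simp [List.concat_eq_append]
    refine ⟨b, ?_, ?_⟩ <;> rw [h6, Lam_concat, eS_mk]
    · left; rfl
    · right; rfl

lemma pref_antisymm {α : Type*} {l m : List α} (h1 : l <+: m) (h2 : m <+: l) :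
    l = m :=
  h1.eq_of_length (le_antisymm h1.length_le h2.length_le)

lemma sandwich {α : Type*} {l u : List α} {s : α} (h1 : l <+: u)
    (h2 : u <+: l ++ [s]) : u = l ∨ u = l ++ [s] := by
  rcases Nat.lt_or_ge u.length (l ++ [s]).length with h | h
  · left
    refine (h1.eq_of_length ?_).symm
    have := h1.length_le
    simp at h
    omega
  · right
    exact h2.eq_of_length (le_antisymm h2.length_le h)

lemma lastEdge : ∀ {x y : V} (w : G.Walk x y), w.edges ≠ [] →
    ∃ z, s(z, y) ∈ w.edges ∧ z ∈ w.support := by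
  intro x y w
  induction w with
  | nil => intro h; exact absurd rfl h
  | @cons x u y h w ih =>
    intro _
    by_cases he : w.edges = []
    · have : u = y := SimpleGraph.Walk.eq_of_length_eq_zero
        (by rw [← SimpleGraph.Walk.length_edges, he]; rfl)
      subst this
      exact ⟨x, by simp, by simp⟩
    · obtain ⟨z, hz1, hz2⟩ := ih he
      exact ⟨z, by simp [hz1], by simp [hz2]⟩


lemma Lam_mem {α : Type*} {l : List (Set α)} (h : l ≠ []) : Lam l ∈ l := by
  rcases List.eq_nil_or_concat l with rfl | ⟨l', b, rfl⟩
  · exact absurd rfl h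
  · rw [List.concat_eq_append, Lam_concat]
    simp

end GDaux

/-- A finite simple graph admits an atom-guarded decomposition iff it is
acyclic (a forest). -/
theorem graph_decomp_iff_acyclic {V : Type*} [Fintype V] (G : SimpleGraph V) :
    (∃ τ : V → List (Set V), IsGDecompGraph G (GraphGuarded G) τ) ↔
      G.IsAcyclic := by
  constructor
  · rintro ⟨τ, h1, h2, h3, h4, h5⟩ v c hc
    classical
    have hAB : ∀ a b : V, G.Adj a b → τ a <+: τ b ∨ τ b <+: τ a := by
      intro a b hab
      obtain ⟨c0, ha, hb⟩ := h3 a b hab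
      have hfa : τ a <+: τ c0 :=
        h4 a (τ c0) (h1 c0).1 (h1 c0).2 (h5 (τ c0) c0 a (h1 c0).1 List.prefix_rfl ha)
      have hfb : τ b <+: τ c0 :=
        h4 b (τ c0) (h1 c0).1 (h1 c0).2 (h5 (τ c0) c0 b (h1 c0).1 List.prefix_rfl hb)
      exact List.prefix_or_prefix_of_prefix hfa hfb
    have hB : ∀ a b : V, G.Adj a b → τ a <+: τ b → Lam (τ b) = {a, b} := by
      intro a b hab hpre
      obtain ⟨c0, ha, hb⟩ := h3 a b hab
      have hfa : τ a <+: τ c0 :=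
        h4 a (τ c0) (h1 c0).1 (h1 c0).2 (h5 (τ c0) c0 a (h1 c0).1 List.prefix_rfl ha)
      have hfb : τ b <+: τ c0 :=
        h4 b (τ c0) (h1 c0).1 (h1 c0).2 (h5 (τ c0) c0 b (h1 c0).1 List.prefix_rfl hb)
      obtain ⟨-, r, hgcp, hrne, hu1, hu2⟩ := h5 (τ c0) c0 a (h1 c0).1 List.prefix_rfl ha
      have hr : r = τ a :=
        GDaux.pref_antisymm hgcp.1 (hgcp.2.2 (τ a) List.prefix_rfl hfa)
      have haL : a ∈ Lam (τ b) := hu2 (τ b) (by rw [hr]; exact hpre) hfb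
      have hbL : b ∈ Lam (τ b) := h2 b
      have hGd : GraphGuarded G (Lam (τ b)) := by
        have := (h1 b).2
        rw [List.forall_iff_forall_mem] at this
        exact this _ (GDaux.Lam_mem (h1 b).1)
      have hane : a ≠ b := hab.ne
      rcases hGd with ⟨x, y, hxy, hsub⟩ | ⟨z, hsub⟩
      · have hax := hsub haL
        have hbx := hsub hbL
        simp only [Set.mem_insert_iff, Set.mem_singleton_iff] at hax hbx
        apply Set.Subset.antisymm
        · intro z hz
          have hzx := hsub hz
          simp only [Set.mem_insert_iff, Set.mem_singleton_iff] at hzx ⊢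
          rcases hax with rfl | rfl <;> rcases hbx with rfl | rfl <;> tauto
        · intro z hz
          simp only [Set.mem_insert_iff, Set.mem_singleton_iff] at hz
          rcases hz with rfl | rfl
          · exact haL
          · exact hbL
      · exfalso
        have h1' := hsub haL
        have h2' := hsub hbL
        simp only [Set.mem_singleton_iff] at h1' h2'
        exact hane (h1'.trans h2'.symm)
    -- cycle contradiction
    have h3len := hc.three_le_length
    have htlen : c.support.tail.length = c.length := by
      have := c.length_support
      simp [List.length_tail, this]
    have htne : c.support.tail ≠ [] := by
      apply List.ne_nil_of_length_pos
      omega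
    obtain ⟨u, hu1, hu2⟩ := c.support.tail.toFinset.exists_max_image
      (fun x => (τ x).length) (by simpa using htne)
    rw [List.mem_toFinset] at hu1
    have humem : u ∈ c.support := List.mem_of_mem_tail hu1
    have hq : (c.rotate u humem).IsCycle := hc.rotate humem
    have hmax : ∀ x ∈ (c.rotate u humem).support, (τ x).length ≤ (τ u).length := by
      intro x hx
      rw [(c.rotate u humem).support_eq_cons] at hx
      rcases List.mem_cons.1 hx with rfl | hx
      · exact le_rfl
      · have hx' : x ∈ c.support.tail :=
          ((SimpleGraph.Walk.support_rotate c u humem).mem_iff).1 hx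
        exact hu2 x (List.mem_toFinset.2 hx')
    have hqlen : 3 ≤ (c.rotate u humem).length := hq.three_le_length
    have hqnn : ¬ (c.rotate u humem).Nil := by
      rw [SimpleGraph.Walk.nil_iff_length_eq]; omega
    obtain ⟨w, hadj, q', heq⟩ := SimpleGraph.Walk.not_nil_iff.mp hqnn
    have hq'e : q'.edges ≠ [] := by
      intro h
      have h0 : q'.length = 0 := by
        rw [← SimpleGraph.Walk.length_edges, h]; rfl
      rw [heq] at hqlen
      simp [h0] at hqlen
    obtain ⟨z, hz1, hz2⟩ := GDaux.lastEdge G q' hq'e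
    have hzadj : G.Adj z u := q'.adj_of_mem_edges hz1
    have hwz : w ≠ z := by
      intro h
      subst h
      have hnod : (c.rotate u humem).edges.Nodup := hq.edges_nodup
      rw [heq] at hnod
      simp only [SimpleGraph.Walk.edges_cons, List.nodup_cons] at hnod
      exact hnod.1 (Sym2.eq_swap ▸ hz1)
    have hwmem : w ∈ (c.rotate u humem).support := by
      rw [heq]
      simp [q'.start_mem_support]
    have hzmem : z ∈ (c.rotate u humem).support := by
      rw [heq]
      simp only [SimpleGraph.Walk.support_cons, List.mem_cons]
      exact Or.inr hz2
    have hw' : τ w <+: τ u := by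
      rcases hAB u w hadj with h | h
      · rw [h.eq_of_length (le_antisymm h.length_le (hmax w hwmem))]
      · exact h
    have hz' : τ z <+: τ u := by
      rcases hAB z u hzadj with h | h
      · exact h
      · rw [(h.eq_of_length (le_antisymm h.length_le (hmax z hzmem))).symm]
    have e1 : Lam (τ u) = {w, u} := hB w u hadj.symm hw'
    have e2 : Lam (τ u) = {z, u} := hB z u hzadj hz'
    apply hwz
    have hmem : w ∈ ({z, u} : Set V) := by
      rw [← e2, e1]
      left; rfl
    simp only [Set.mem_insert_iff, Set.mem_singleton_iff] at hmem
    rcases hmem with h | h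
    · exact h
    · exact absurd h hadj.ne'
  · intro hG
    refine ⟨GDaux.gtau G, ?_, fun a => GDaux.mem_Lam_gtau G hG a,
      fun a b hab => GDaux.edge_cover G hG hab, ?_, ?_⟩
    · intro a
      refine ⟨GDaux.gtau_ne_nil G a, ?_⟩
      rw [List.forall_iff_forall_mem]
      intro X hX
      rcases List.mem_cons.1 hX with rfl | hX
      · exact Or.inr ⟨GDaux.groot G a, subset_rfl⟩
      · obtain ⟨e, he, rfl⟩ := List.mem_map.1 hX
        revert he
        induction e using Sym2.ind with
        | _ x y =>
          intro he
          exact Or.inl ⟨x, y, SimpleGraph.Walk.adj_of_mem_edges _ he,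
            (GDaux.eS_mk x y).subset⟩
    · rintro a q hq hgd ⟨-, r, hgcp, hrne, hu1, hu2⟩
      have ha : a ∈ Lam r := hu1 r List.prefix_rfl hgcp.1
      obtain ⟨d, hd⟩ := GDaux.prefix_gtau G hG (GDaux.gtau G a).length a r
        le_rfl hrne hgcp.1
      subst hd
      rcases GDaux.mem_Lam_cases G hG ha with h | h
      · rw [h]; exact hgcp.2.1
      · exfalso
        have hl := hgcp.1.length_le
        rw [h] at hl
        simp at hl
    · intro q c0 a hq hpre ha
      obtain ⟨d, hd⟩ := GDaux.prefix_gtau G hG (GDaux.gtau G c0).length c0 q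
        le_rfl hq hpre
      subst hd
      rcases GDaux.mem_Lam_cases G hG ha with h | h
      · refine ⟨rfl, GDaux.gtau G a,
          ⟨List.prefix_rfl, by rw [h], fun u hu _ => hu⟩,
          GDaux.gtau_ne_nil G a, ?_, ?_⟩
        · intro u hu1 hu2
          rw [← GDaux.pref_antisymm hu1 hu2]
          exact GDaux.mem_Lam_gtau G hG a
        · intro u hu1 hu2
          rw [← h] at hu2
          rw [← GDaux.pref_antisymm hu1 hu2]
          exact GDaux.mem_Lam_gtau G hG a
      · refine ⟨rfl, GDaux.gtau G a,
          ⟨List.prefix_rfl, by rw [h]; exact List.prefix_append _ _,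
            fun u hu _ => hu⟩,
          GDaux.gtau_ne_nil G a, ?_, ?_⟩
        · intro u hu1 hu2
          rw [← GDaux.pref_antisymm hu1 hu2]
          exact GDaux.mem_Lam_gtau G hG a
        · intro u hu1 hu2
          rw [h] at hu2
          rcases GDaux.sandwich hu1 hu2 with h' | h'
          · rw [h']
            exact GDaux.mem_Lam_gtau G hG a
          · rw [h', ← h]
            exact ha
end
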